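/- Let P_n (n ∈ ℕ) and P be probability measures on ℝ^d, let f : ℝ^d → ℝ^m be Lipschitz, and let ω be a probability measure on ℝ^m with ∫ ‖t‖ dω(t) < ∞. If P_n converges to P in distribution, then CFD²_ω(f_*P_n, f_*P) → 0 as n → ∞. -/

import Mathlib

open MeasureTheory Filter Topology
open scoped NNReal

/-- Characteristic function of a measure on Euclidean space. -/
noncomputable def charFn {m : ℕ} (μ : Measure (EuclideanSpace ℝ (Fin m)))
    (t : EuclideanSpace ℝ (Fin m)) : ℂ :=
  ∫ x, Complex.exp (Complex.I * ((inner ℝ t x : ℝ) : ℂ)) ∂μ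

lemma exp_norm_one {m : ℕ} (t x : EuclideanSpace ℝ (Fin m)) :
    ‖Complex.exp (Complex.I * ((inner ℝ t x : ℝ) : ℂ))‖ = 1 := by
  simp [Complex.norm_exp]

lemma charFn_map {d m : ℕ} (μ : Measure (EuclideanSpace ℝ (Fin d))) [IsProbabilityMeasure μ]
    (f : EuclideanSpace ℝ (Fin d) → EuclideanSpace ℝ (Fin m)) (hf : Continuous f)
    (t : EuclideanSpace ℝ (Fin m)) :
    charFn (μ.map f) t = ((∫ x, Real.cos (inner ℝ t (f x)) ∂μ : ℝ) : ℂ)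
      + ((∫ x, Real.sin (inner ℝ t (f x)) ∂μ : ℝ) : ℂ) * Complex.I := by
  have hr : Continuous fun x => (inner ℝ t (f x) : ℝ) := continuous_const.inner hf
  have hcos : Integrable (fun x => Real.cos (inner ℝ t (f x))) μ :=
    Integrable.mono' (integrable_const 1) ((Real.continuous_cos.comp hr).aestronglyMeasurable)
      (Eventually.of_forall fun x => by simpa using Real.abs_cos_le_one _)
  have hsin : Integrable (fun x => Real.sin (inner ℝ t (f x))) μ :=
    Integrable.mono' (integrable_const 1) ((Real.continuous_sin.comp hr).aestronglyMeasurable)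
      (Eventually.of_forall fun x => by simpa using Real.abs_sin_le_one _)
  have hmeas : AEStronglyMeasurable (fun x => Complex.exp (Complex.I * ((inner ℝ t x : ℝ) : ℂ)))
      (μ.map f) :=
    (Complex.continuous_exp.comp (continuous_const.mul
      (Complex.continuous_ofReal.comp (continuous_const.inner continuous_id)))).aestronglyMeasurable
  rw [charFn, integral_map hf.measurable.aemeasurable hmeas]
  have key : ∀ x, Complex.exp (Complex.I * ((inner ℝ t (f x) : ℝ) : ℂ))
      = ((Real.cos (inner ℝ t (f x)) : ℝ) : ℂ) + ((Real.sin (inner ℝ t (f x)) : ℝ) : ℂ) * Complex.I := by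
    intro x
    rw [mul_comm, Complex.exp_mul_I, Complex.ofReal_cos, Complex.ofReal_sin]
  simp_rw [key]
  have hcosC : Integrable (fun x => ((Real.cos (inner ℝ t (f x)) : ℝ) : ℂ)) μ := hcos.ofReal
  have hsinC : Integrable (fun x => ((Real.sin (inner ℝ t (f x)) : ℝ) : ℂ) * Complex.I) μ :=
    hsin.ofReal.mul_const Complex.I
  rw [integral_add hcosC hsinC, integral_mul_const]
  congr 1
  · exact integral_ofReal
  · congr 1
    exact integral_ofReal

lemma charFn_norm_le_one {m : ℕ} (μ : Measure (EuclideanSpace ℝ (Fin m)))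
    [IsProbabilityMeasure μ] (t : EuclideanSpace ℝ (Fin m)) : ‖charFn μ t‖ ≤ 1 := by
  calc ‖charFn μ t‖ ≤ ∫ x, ‖Complex.exp (Complex.I * ((inner ℝ t x : ℝ) : ℂ))‖ ∂μ :=
        norm_integral_le_integral_norm _
    _ = 1 := by
        rw [show (fun x => ‖Complex.exp (Complex.I * ((inner ℝ t x : ℝ) : ℂ))‖) = fun _ => (1:ℝ)
          from funext (exp_norm_one t)]
        simp

lemma charFn_continuous {m : ℕ} (μ : Measure (EuclideanSpace ℝ (Fin m)))
    [IsFiniteMeasure μ] : Continuous (charFn μ) := by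
  apply continuous_of_dominated (bound := fun _ => (1:ℝ))
  · intro t
    exact (Complex.continuous_exp.comp (continuous_const.mul
      (Complex.continuous_ofReal.comp (continuous_const.inner continuous_id)))).aestronglyMeasurable
  · intro t
    exact Eventually.of_forall fun x => le_of_eq (exp_norm_one t x)
  · exact integrable_const 1
  · exact Eventually.of_forall fun x => Complex.continuous_exp.comp (continuous_const.mul
      (Complex.continuous_ofReal.comp ((continuous_id.inner continuous_const))))

/-- Squared characteristic function distance between `μ` and `ν` with weighting measure `ω`. -/
noncomputable def CFD2 {m : ℕ} (ω μ ν : Measure (EuclideanSpace ℝ (Fin m))) : ℝ :=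
  ∫ t, ‖charFn μ t - charFn ν t‖ ^ 2 ∂ω
/-- if Pₙ → P in distribution, f is Lipschitz, and ∫‖t‖ dω < ∞, then
CFD²_ω(f_*Pₙ, f_*P) → 0. -/
theorem cfd_tendsto_zero_of_tendsto_in_distribution
    {d m : ℕ}
    (P : ℕ → Measure (EuclideanSpace ℝ (Fin d)))
    (Plim : Measure (EuclideanSpace ℝ (Fin d)))
    (hP : ∀ n, IsProbabilityMeasure (P n)) (hPlim : IsProbabilityMeasure Plim)
    (f : EuclideanSpace ℝ (Fin d) → EuclideanSpace ℝ (Fin m))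
    (K : ℝ≥0) (hf : LipschitzWith K f)
    (ω : Measure (EuclideanSpace ℝ (Fin m))) (hω : IsProbabilityMeasure ω)
    (hωint : Integrable (fun t => ‖t‖) ω)
    (hweak : ∀ g : BoundedContinuousFunction (EuclideanSpace ℝ (Fin d)) ℝ,
      Tendsto (fun n => ∫ x, g x ∂(P n)) atTop (nhds (∫ x, g x ∂Plim))) :
    Tendsto (fun n => CFD2 ω ((P n).map f) (Plim.map f)) atTop (nhds 0) := by
  have hfc : Continuous f := hf.continuous
  have hmapn : ∀ n, IsProbabilityMeasure ((P n).map f) := fun n =>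
    Measure.isProbabilityMeasure_map hfc.measurable.aemeasurable
  have hmapl : IsProbabilityMeasure (Plim.map f) :=
    Measure.isProbabilityMeasure_map hfc.measurable.aemeasurable
  -- pointwise convergence of characteristic functions
  have hpt : ∀ t, Tendsto (fun n => charFn ((P n).map f) t) atTop
      (nhds (charFn (Plim.map f) t)) := by
    intro t
    have hr : Continuous fun x => (inner ℝ t (f x) : ℝ) := continuous_const.inner hfc
    set gc : BoundedContinuousFunction (EuclideanSpace ℝ (Fin d)) ℝ :=
      BoundedContinuousFunction.ofNormedAddCommGroup _ (Real.continuous_cos.comp hr) 1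
        (fun x => by simpa using Real.abs_cos_le_one _) with hgc
    set gs : BoundedContinuousFunction (EuclideanSpace ℝ (Fin d)) ℝ :=
      BoundedContinuousFunction.ofNormedAddCommGroup _ (Real.continuous_sin.comp hr) 1
        (fun x => by simpa using Real.abs_sin_le_one _) with hgs
    have hc := hweak gc
    have hs := hweak gs
    have hgc' : ∀ (μ : Measure (EuclideanSpace ℝ (Fin d))),
        (∫ x, gc x ∂μ) = ∫ x, Real.cos (inner ℝ t (f x)) ∂μ := fun μ => rfl
    have hgs' : ∀ (μ : Measure (EuclideanSpace ℝ (Fin d))),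
        (∫ x, gs x ∂μ) = ∫ x, Real.sin (inner ℝ t (f x)) ∂μ := fun μ => rfl
    simp_rw [hgc'] at hc
    simp_rw [hgs'] at hs
    have := fun n => charFn_map (P n) f hfc t
    simp_rw [fun n => charFn_map (P n) f hfc t, charFn_map Plim f hfc t]
    exact ((Complex.continuous_ofReal.tendsto _).comp hc).add
      (((Complex.continuous_ofReal.tendsto _).comp hs).mul_const _)
  have hpt2 : ∀ t, Tendsto
      (fun n => ‖charFn ((P n).map f) t - charFn (Plim.map f) t‖ ^ 2)
      atTop (nhds 0) := by
    intro t
    have h0 : Tendsto (fun n => charFn ((P n).map f) t - charFn (Plim.map f) t) atTop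
        (nhds 0) := by
      have := (hpt t).sub (tendsto_const_nhds (x := charFn (Plim.map f) t))
      simpa using this
    have := (h0.norm).pow 2
    simpa using this
  -- dominated convergence
  have hmain : Tendsto
      (fun n => ∫ t, ‖charFn ((P n).map f) t - charFn (Plim.map f) t‖ ^ 2 ∂ω)
      atTop (nhds (∫ (_ : EuclideanSpace ℝ (Fin m)), (0:ℝ) ∂ω)) := by
    apply tendsto_integral_of_dominated_convergence (fun _ => (4:ℝ))
    · intro n
      have : Continuous fun t =>
          ‖charFn ((P n).map f) t - charFn (Plim.map f) t‖ ^ 2 :=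
        (continuous_norm.comp
          ((charFn_continuous ((P n).map f)).sub (charFn_continuous (Plim.map f)))).pow 2
      exact this.aestronglyMeasurable
    · exact integrable_const 4
    · intro n
      refine Eventually.of_forall fun t => ?_
      have hb : ‖charFn ((P n).map f) t - charFn (Plim.map f) t‖ ≤ 2 := by
        calc ‖charFn ((P n).map f) t - charFn (Plim.map f) t‖
            ≤ ‖charFn ((P n).map f) t‖ + ‖charFn (Plim.map f) t‖ := norm_sub_le _ _
          _ ≤ 1 + 1 := add_le_add (charFn_norm_le_one _ t) (charFn_norm_le_one _ t)
          _ = 2 := by norm_num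
      have : ‖charFn ((P n).map f) t - charFn (Plim.map f) t‖ ^ 2 ≤ 2 ^ 2 :=
        pow_le_pow_left₀ (norm_nonneg _) hb 2
      rw [Real.norm_eq_abs, abs_of_nonneg (by positivity)]
      linarith
    · exact Eventually.of_forall hpt2
  simpa [CFD2] using hmain
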